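/- arXiv:1611.00990 — 2 statements merged into one kernel-verified Lean document; each statement's English description precedes it below -/
import Mathlib

section
/- If sequences u_1,...,u_m of vectors satisfy, for every K ≥ 0 and each i, the gain inequalities ‖u_{(i mod m)+1}‖^{λ,K} ≤ γ_i ‖u_i‖^{λ,K} + ω_i, where ‖u‖^{λ,K} = max_{k=0..K} λ^{-k}‖u(k)‖ with λ ∈ (0,1), and the nonnegative gains satisfy γ_1 γ_2 ⋯ γ_m < 1, then sup_{k≥0} λ^{-k}‖u_1(k)‖ ≤ (1/(1 - γ_1⋯γ_m)) (γ_m γ_{m-1}⋯γ_2 ω_1 + γ_m γ_{m-1}⋯γ_3 ω_2 + ⋯ + γ_m ω_{m-1} + ω_m). -/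
open Fin.NatCast

/-- The small gain theorem for weighted sequence norms. -/
theorem small_gain_theorem {d m : ℕ} [NeZero m] (lam : ℝ)
    (hlam : lam ∈ Set.Ioo (0 : ℝ) 1)
    (u : Fin m → ℕ → EuclideanSpace ℝ (Fin d)) (γ ω : Fin m → ℝ)
    (hγ : ∀ i, 0 ≤ γ i) (hω : ∀ i, 0 ≤ ω i)
    (hprod : ∏ i, γ i < 1)
    (hgain : ∀ (K : ℕ) (i : Fin m),
      ((Finset.range (K + 1)).sup' (by simp) fun k => ‖u (i + 1) k‖ / lam ^ k) ≤
        γ i * ((Finset.range (K + 1)).sup' (by simp) fun k => ‖u i k‖ / lam ^ k) + ω i) :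
    (⨆ k : ℕ, ‖u 0 k‖ / lam ^ k) ≤
      (1 / (1 - ∏ i, γ i)) * ∑ i, (∏ j ∈ Finset.Ioi i, γ j) * ω i := by
  set N : Fin m → ℕ → ℝ := fun i K =>
    (Finset.range (K + 1)).sup' (by simp) fun k => ‖u i k‖ / lam ^ k with hN
  have key : ∀ (K n : ℕ), N (↑n) K ≤ (∏ i ∈ Finset.range n, γ ↑i) * N 0 K +
      ∑ i ∈ Finset.range n, (∏ j ∈ Finset.Ioo i n, γ ↑j) * ω ↑i := by
    intro K n
    induction n with
    | zero => simp
    | succ n ih =>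
      have h1 : N (↑(n + 1)) K ≤ γ ↑n * N ↑n K + ω ↑n := by
        have := hgain K ↑n
        push_cast
        exact this
      calc N (↑(n + 1)) K ≤ γ ↑n * N ↑n K + ω ↑n := h1
        _ ≤ γ ↑n * ((∏ i ∈ Finset.range n, γ ↑i) * N 0 K +
              ∑ i ∈ Finset.range n, (∏ j ∈ Finset.Ioo i n, γ ↑j) * ω ↑i) + ω ↑n := by
            gcongr
            exact hγ _
        _ = (∏ i ∈ Finset.range (n + 1), γ ↑i) * N 0 K +
              ∑ i ∈ Finset.range (n + 1), (∏ j ∈ Finset.Ioo i (n + 1), γ ↑j) * ω ↑i := by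
            have hIoo : ∀ i ∈ Finset.range n,
                (∏ j ∈ Finset.Ioo i (n + 1), γ (↑j : Fin m)) * ω ↑i =
                  (γ ↑n * ∏ j ∈ Finset.Ioo i n, γ ↑j) * ω ↑i := by
              intro i hi
              have hilt := Finset.mem_range.mp hi
              have hset : Finset.Ioo i (n + 1) = insert n (Finset.Ioo i n) := by
                ext x; simp only [Finset.mem_Ioo, Finset.mem_insert]; omega
              rw [hset, Finset.prod_insert (by simp)]
            have hIoo2 : Finset.Ioo n (n + 1) = (∅ : Finset ℕ) := by
              ext x; simp
            rw [Finset.prod_range_succ, Finset.sum_range_succ, hIoo2, Finset.prod_empty,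
              Finset.sum_congr rfl hIoo, mul_add, Finset.mul_sum]
            simp only [mul_assoc, one_mul]
            ring
  -- identify products at n = m
  have hAm : (∏ i ∈ Finset.range m, γ ↑i) = ∏ i, γ i :=
    (Fin.prod_univ_eq_prod_range (fun i => γ ↑i) m).symm.trans (by
      congr 1; ext i; congr 1; exact Fin.cast_val_eq_self i)
  have hBm : (∑ i ∈ Finset.range m, (∏ j ∈ Finset.Ioo i m, γ ↑j) * ω ↑i) =
      ∑ i, (∏ j ∈ Finset.Ioi i, γ j) * ω i := by
    rw [← Fin.sum_univ_eq_sum_range (fun i => (∏ j ∈ Finset.Ioo i m, γ ↑j) * ω ↑i) m]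
    refine Finset.sum_congr rfl fun i _ => ?_
    rw [Fin.cast_val_eq_self]
    have hprodeq : (∏ j ∈ Finset.Ioi i, γ j) = ∏ j ∈ Finset.Ioo (i : ℕ) m, γ (↑j : Fin m) := by
      refine Finset.prod_nbij (fun j => (j : ℕ)) ?_ ?_ ?_ ?_
      · intro j hj
        simp only [Finset.mem_Ioi, Fin.lt_iff_val_lt_val] at hj
        simp only [Finset.mem_Ioo]
        exact ⟨hj, j.isLt⟩
      · intro a _ b _ h
        exact Fin.val_injective h
      · intro x hx
        simp only [Finset.coe_Ioo, Set.mem_Ioo] at hx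
        exact ⟨⟨x, hx.2⟩, by simpa [Finset.mem_Ioi, Fin.lt_iff_val_lt_val] using hx.1, rfl⟩
      · intro j _
        rw [Fin.cast_val_eq_self]
    rw [hprodeq]
  have hP1 : (0:ℝ) < 1 - ∏ i, γ i := by linarith
  have hS0 : (0:ℝ) ≤ ∑ i, (∏ j ∈ Finset.Ioi i, γ j) * ω i :=
    Finset.sum_nonneg fun i _ => mul_nonneg (Finset.prod_nonneg fun j _ => hγ j) (hω i)
  have hbound0 : (0:ℝ) ≤ (1 / (1 - ∏ i, γ i)) * ∑ i, (∏ j ∈ Finset.Ioi i, γ j) * ω i :=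
    mul_nonneg (by positivity) hS0
  have hN0 : ∀ K, N 0 K ≤ (1 / (1 - ∏ i, γ i)) * ∑ i, (∏ j ∈ Finset.Ioi i, γ j) * ω i := by
    intro K
    have h := key K m
    rw [hAm, hBm] at h
    have hm0 : ((m : ℕ) : Fin m) = 0 := Fin.natCast_self m
    rw [hm0] at h
    rw [div_mul_eq_mul_div, le_div_iff₀ hP1]
    nlinarith
  refine Real.iSup_le (fun k => ?_) hbound0
  refine le_trans ?_ (hN0 k)
  exact Finset.le_sup' (fun k' => ‖u 0 k'‖ / lam ^ k') (Finset.self_mem_range_succ k)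
end

section
/- Let λ ∈ (0,1), δ ∈ (0, λ^B) for a positive integer B, Q ≥ 0, and let nonnegative sequences a, b : ℕ → ℝ satisfy a(k+1) ≤ δ·a(k+1−B) + Q·Σ_{t=1}^{B} b(k+2−t) for all k ≥ B−1. Then for all K ≥ 0, max_{0≤k≤K} λ^{-k} a(k) ≤ (Q λ(1−λ^B))/((λ^B − δ)(1−λ)) · max_{0≤k≤K} λ^{-k} b(k) + (λ^B/(λ^B − δ)) · Σ_{t=1}^{B} λ^{-(t−1)} a(t−1). -/
/-- Weighted-norm bound from a `B`-step contraction recursion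
(Lemma 3.7 (ii), abstract form). -/
theorem contraction_recursion_weighted_bound
    (lam δ Q : ℝ) (B : ℕ) (hB : 0 < B)
    (hlam : lam ∈ Set.Ioo (0 : ℝ) 1)
    (hδ : δ ∈ Set.Ioo (0 : ℝ) (lam ^ B)) (hQ : 0 ≤ Q)
    (a b : ℕ → ℝ) (ha : ∀ k, 0 ≤ a k) (hb : ∀ k, 0 ≤ b k)
    (hrec : ∀ k : ℕ, B - 1 ≤ k →
      a (k + 1) ≤ δ * a (k + 1 - B) + Q * ∑ t ∈ Finset.Icc 1 B, b (k + 2 - t)) :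
    ∀ K : ℕ,
      ((Finset.range (K + 1)).sup' (by simp) fun k => a k / lam ^ k) ≤
        Q * lam * (1 - lam ^ B) / ((lam ^ B - δ) * (1 - lam)) *
            ((Finset.range (K + 1)).sup' (by simp) fun k => b k / lam ^ k) +
          lam ^ B / (lam ^ B - δ) *
            ∑ t ∈ Finset.Icc 1 B, a (t - 1) / lam ^ (t - 1) := by
  obtain ⟨hlam0, hlam1⟩ := hlam
  obtain ⟨hδ0, hδlt⟩ := hδ
  intro K
  have hlamB : (0:ℝ) < lam ^ B := pow_pos hlam0 B
  set A := (Finset.range (K+1)).sup' (by simp) (fun k => a k / lam ^ k) with hAdef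
  set Bb := (Finset.range (K+1)).sup' (by simp) (fun k => b k / lam ^ k) with hBdef
  set S := ∑ t ∈ Finset.Icc 1 B, a (t-1) / lam ^ (t-1) with hSdef
  set T := ∑ t ∈ Finset.Icc 1 B, (1 / lam ^ (t-1)) with hTdef
  have hA0 : 0 ≤ A := by
    refine le_trans ?_ (Finset.le_sup' (fun k => a k / lam ^ k) (by simp : 0 ∈ Finset.range (K+1)))
    have := ha 0; positivity
  have hBb0 : 0 ≤ Bb := by
    refine le_trans ?_ (Finset.le_sup' (fun k => b k / lam ^ k) (by simp : 0 ∈ Finset.range (K+1)))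
    have := hb 0; positivity
  have hS0 : 0 ≤ S := Finset.sum_nonneg fun t _ => by have := ha (t-1); positivity
  have hT0 : 0 ≤ T := Finset.sum_nonneg fun t _ => by positivity
  have key : A ≤ δ / lam ^ B * A + Q * T * Bb + S := by
    apply Finset.sup'_le
    intro k hk
    rw [Finset.mem_range] at hk
    by_cases hkB : k < B
    · have h1 : a k / lam ^ k ≤ S := by
        have hmem : k + 1 ∈ Finset.Icc 1 B := by simp; omega
        have := Finset.single_le_sum (f := fun t => a (t-1)/lam^(t-1))
          (fun t _ => by have := ha (t-1); positivity) hmem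
        simpa using this
      have h2 : 0 ≤ δ / lam ^ B * A + Q * T * Bb := by positivity
      linarith
    · push_neg at hkB
      obtain ⟨j, rfl⟩ : ∃ j, k = j + 1 := ⟨k - 1, by omega⟩
      have hrec' := hrec j (by omega)
      have hpow : (0:ℝ) < lam ^ (j+1) := pow_pos hlam0 _
      have step1 : a (j+1) / lam ^ (j+1) ≤
          (δ * a (j + 1 - B) + Q * ∑ t ∈ Finset.Icc 1 B, b (j + 2 - t)) / lam ^ (j+1) :=
        div_le_div_of_nonneg_right hrec' hpow.le |>.trans_eq rfl
      refine step1.trans ?_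
      rw [add_div]
      have hterm1 : δ * a (j + 1 - B) / lam ^ (j+1) ≤ δ / lam ^ B * A := by
        have hsplit : lam ^ (j+1) = lam ^ B * lam ^ (j+1-B) := by
          rw [← pow_add]; congr 1; omega
        have hle : a (j+1-B) / lam ^ (j+1-B) ≤ A :=
          Finset.le_sup' (fun k => a k / lam ^ k) (by simp; omega : j+1-B ∈ Finset.range (K+1))
        have hpos : (0:ℝ) < lam ^ (j+1-B) := pow_pos hlam0 _
        rw [hsplit]
        calc δ * a (j+1-B) / (lam ^ B * lam ^ (j+1-B))
            = (δ / lam ^ B) * (a (j+1-B) / lam ^ (j+1-B)) := by ring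
          _ ≤ (δ / lam ^ B) * A := by
              apply mul_le_mul_of_nonneg_left hle
              positivity
      have hterm2 : Q * (∑ t ∈ Finset.Icc 1 B, b (j + 2 - t)) / lam ^ (j+1) ≤ Q * T * Bb := by
        rw [mul_div_assoc]
        have hsum : (∑ t ∈ Finset.Icc 1 B, b (j + 2 - t)) / lam ^ (j+1) ≤ T * Bb := by
          rw [Finset.sum_div, hTdef, Finset.sum_mul]
          apply Finset.sum_le_sum
          intro t ht
          rw [Finset.mem_Icc] at ht
          have hsplit : lam ^ (j+1) = lam ^ (j+2-t) * lam ^ (t-1) := by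
            rw [← pow_add]; congr 1; omega
          have hle : b (j+2-t) / lam ^ (j+2-t) ≤ Bb :=
            Finset.le_sup' (fun k => b k / lam ^ k)
              (by simp; omega : j+2-t ∈ Finset.range (K+1))
          have hp1 : (0:ℝ) < lam ^ (j+2-t) := pow_pos hlam0 _
          have hp2 : (0:ℝ) < lam ^ (t-1) := pow_pos hlam0 _
          rw [hsplit]
          calc b (j+2-t) / (lam ^ (j+2-t) * lam ^ (t-1))
              = (1 / lam ^ (t-1)) * (b (j+2-t) / lam ^ (j+2-t)) := by ring
            _ ≤ (1 / lam ^ (t-1)) * Bb := by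
                apply mul_le_mul_of_nonneg_left hle; positivity
        calc Q * ((∑ t ∈ Finset.Icc 1 B, b (j + 2 - t)) / lam ^ (j+1))
            ≤ Q * (T * Bb) := mul_le_mul_of_nonneg_left hsum hQ
          _ = Q * T * Bb := by ring
      linarith
  -- compute T
  have hlaminv : lam⁻¹ ≠ 1 := by
    intro h
    have : lam = 1 := by
      field_simp at h; linarith
    linarith
  have hTeq : T = lam * (1 - lam ^ B) / (lam ^ B * (1 - lam)) := by
    have h1 : T = ∑ i ∈ Finset.range B, (lam⁻¹) ^ i := by
      rw [hTdef]
      rw [show Finset.Icc 1 B = Finset.Ico 1 (B+1) by rfl]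
      rw [Finset.sum_Ico_eq_sum_range]
      simp [one_div, inv_pow]
    rw [h1, geom_sum_eq hlaminv]
    have hne : lam ≠ 0 := ne_of_gt hlam0
    have hne1 : (1:ℝ) - lam ≠ 0 := by linarith
    have hnB : lam ^ B ≠ 0 := ne_of_gt hlamB
    field_simp
    ring_nf; rw [← mul_pow, mul_inv_cancel₀ hne, one_pow]; ring
  -- rearrange key
  have hgap : (0:ℝ) < lam ^ B - δ := by linarith
  have key2 : A * ((lam ^ B - δ) / lam ^ B) ≤ Q * T * Bb + S := by
    have : A * (δ / lam ^ B) + A * ((lam ^ B - δ) / lam ^ B) = A := by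
      field_simp
      ring
    nlinarith [key]
  have key3 : A ≤ lam ^ B / (lam ^ B - δ) * (Q * T * Bb + S) := by
    have hc : (0:ℝ) < (lam ^ B - δ) / lam ^ B := by positivity
    have := mul_le_mul_of_nonneg_left key2 (le_of_lt (by positivity : (0:ℝ) < lam ^ B / (lam ^ B - δ)))
    calc A = lam ^ B / (lam ^ B - δ) * (A * ((lam ^ B - δ) / lam ^ B)) := by
            field_simp
      _ ≤ lam ^ B / (lam ^ B - δ) * (Q * T * Bb + S) := this
  refine key3.trans_eq ?_
  rw [hTeq]
  have hne : lam ≠ 0 := ne_of_gt hlam0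
  have hne1 : (1:ℝ) - lam ≠ 0 := by linarith
  have hnB : lam ^ B ≠ 0 := ne_of_gt hlamB
  have hng : lam ^ B - δ ≠ 0 := ne_of_gt hgap
  field_simp
end
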